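/- Let Wₖ = p(x, Zₖ)/q(Zₖ|x) with Zₖ i.i.d. from q(·|x), and suppose W₁ is integrable with E[W₁] = p(x) and Var(W₁) < ∞. Then the IWAE bound satisfies log p(x) − L_K → 0 as K → ∞, i.e., L_K converges to log p(x), provided additionally that log((1/K)∑Wₖ) is uniformly integrable. -/

import Mathlib

open MeasureTheory ProbabilityTheory Filter Topology

/-! By the strong law of large numbers the empirical mean `(1/K) ∑ₖ Wₖ` tends to
`E[W₁] = p(x) > 0` almost surely, so by continuity of `log` at `p(x)` the integrands of `L_K`
tend to `log p(x)` almost surely. Uniform integrability upgrades this to convergence in `L¹`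
(Vitali), hence `L_K → log p(x)`. -/

theorem integrable_of_eLpNorm_sub_lt_top {α E : Type*} [MeasurableSpace α] {μ : Measure α}
    [NormedAddCommGroup E] {f g : α → E} (hf : AEStronglyMeasurable f μ) (hg : Integrable g μ)
    (hfg : eLpNorm (f - g) 1 μ < ⊤) : Integrable f μ := by
  have hdiff : Integrable (f - g) μ := memLp_one_iff_integrable.1 ⟨hf.sub hg.1, hfg⟩
  simpa using hdiff.add hg

theorem tendsto_integral_of_unifIntegrable_of_tendsto_ae {α E : Type*} [MeasurableSpace α]
    {μ : Measure α} [IsFiniteMeasure μ] [NormedAddCommGroup E] [NormedSpace ℝ E]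
    {f : ℕ → α → E} {g : α → E} (hf : ∀ n, AEStronglyMeasurable (f n) μ)
    (hg : Integrable g μ) (hui : UnifIntegrable f 1 μ)
    (hfg : ∀ᵐ x ∂μ, Tendsto (fun n => f n x) atTop (𝓝 (g x))) :
    Tendsto (fun n => ∫ x, f n x ∂μ) atTop (𝓝 (∫ x, g x ∂μ)) := by
  have hL1 : Tendsto (fun n => eLpNorm (f n - g) 1 μ) atTop (𝓝 0) :=
    tendsto_Lp_finite_of_tendsto_ae le_rfl ENNReal.one_ne_top hf
      (memLp_one_iff_integrable.2 hg) hui hfg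
  refine tendsto_integral_of_L1' g hg.1 ?_ hL1
  filter_upwards [hL1.eventually_lt_const ENNReal.zero_lt_top] with n hn
  exact integrable_of_eLpNorm_sub_lt_top (hf n) hg hn

theorem strong_law_ae_comp {Ω Z : Type*} [MeasurableSpace Ω] [MeasurableSpace Z] {μ : Measure Ω}
    {X : ℕ → Ω → Z} {f : Z → ℝ} (hf : Measurable f)
    (hindep : Pairwise fun i j => X i ⟂ᵢ[μ] X j)
    (hident : ∀ i, IdentDistrib (X i) (X 0) μ μ) (hint : Integrable (f ∘ X 0) μ) :
    ∀ᵐ ω ∂μ, Tendsto (fun n : ℕ => (∑ i ∈ Finset.range n, f (X i ω)) / n) atTop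
      (𝓝 μ[f ∘ X 0]) :=
  strong_law_ae_real (fun i => f ∘ X i) hint (fun _ _ hij => (hindep hij).comp hf hf)
    fun i => (hident i).comp hf

theorem iwae_bound_consistent_general
    {Z : Type*} [MeasurableSpace Z] (ν : Measure Z)
    {Ω : Type*} [MeasurableSpace Ω] (Pr : Measure Ω) [IsProbabilityMeasure Pr]
    (pj q : Z → ℝ) (px : ℝ) (Zs : ℕ → Ω → Z) (W : ℕ → Ω → ℝ)
    (hpj_meas : Measurable pj) (hq_meas : Measurable q)
    (hpx_pos : 0 < px)
    (hZ_meas : ∀ k, Measurable (Zs k))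
    -- each `Zₖ` has density `q`, and the `Zₖ` are i.i.d.
    (hlaw : ∀ k, Measure.map (Zs k) Pr = ν.withDensity (fun z => ENNReal.ofReal (q z)))
    (hindep : iIndepFun Zs Pr)
    (hW : ∀ k ω, W k ω = pj (Zs k ω) / q (Zs k ω))
    -- `W₁` is integrable with `E[W₁] = p(x)` and finite variance
    (hW_int : Integrable (W 0) Pr)
    (hW_mean : ∫ ω, W 0 ω ∂Pr = px)
    -- uniform integrability of `log((1/K) ∑ₖ Wₖ)`
    (hUI : UnifIntegrable
      (fun (K : ℕ) ω => Real.log ((1 / (K : ℝ)) * ∑ k ∈ Finset.range K, W k ω)) 1 Pr) :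
    Filter.Tendsto
      (fun K : ℕ =>
        Real.log px -
          ∫ ω, Real.log ((1 / (K : ℝ)) * ∑ k ∈ Finset.range K, W k ω) ∂Pr)
      Filter.atTop (nhds 0) := by
  set f : Z → ℝ := fun z => pj z / q z
  have hf : Measurable f := hpj_meas.div hq_meas
  obtain rfl : W = fun k => f ∘ Zs k := funext fun k => funext (hW k)
  have hident : ∀ k, IdentDistrib (Zs k) (Zs 0) Pr Pr := fun k =>
    ⟨(hZ_meas k).aemeasurable, (hZ_meas 0).aemeasurable, (hlaw k).trans (hlaw 0).symm⟩
  have hmean := strong_law_ae_comp hf (fun _ _ hij => hindep.indepFun hij) hident hW_int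
  have hlog : ∀ᵐ ω ∂Pr, Tendsto
      (fun K : ℕ => Real.log ((1 / (K : ℝ)) * ∑ k ∈ Finset.range K, f (Zs k ω))) atTop
      (𝓝 (Real.log px)) := by
    filter_upwards [hmean] with ω hω
    rw [hW_mean] at hω
    refine (Real.continuousAt_log hpx_pos.ne').tendsto.comp ?_
    simpa only [one_div_mul_eq_div] using hω
  have hmeas : ∀ K : ℕ, AEStronglyMeasurable
      (fun ω => Real.log ((1 / (K : ℝ)) * ∑ k ∈ Finset.range K, f (Zs k ω))) Pr := fun K =>
    (Real.measurable_log.comp (measurable_const.mul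
      (Finset.measurable_sum _ fun k _ => hf.comp (hZ_meas k)))).aestronglyMeasurable
  simpa using (tendsto_const_nhds (x := Real.log px)).sub
    (tendsto_integral_of_unifIntegrable_of_tendsto_ae hmeas (integrable_const _) hUI hlog)

/-- Consistency of the IWAE bound: with `Zₖ` i.i.d. from the proposal density `q`
and importance ratios `Wₖ = p(x,Zₖ)/q(Zₖ)` integrable with mean `p(x)` and finite
variance, if the logarithms `log((1/K) ∑ₖ Wₖ)` are uniformly integrable then the
gap `log p(x) − L_K` tends to `0` as `K → ∞`. -/
theorem iwae_bound_consistent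
    {Z : Type*} [MeasurableSpace Z] (ν : Measure Z)
    {Ω : Type*} [MeasurableSpace Ω] (Pr : Measure Ω) [IsProbabilityMeasure Pr]
    (pj q : Z → ℝ) (px : ℝ) (Zs : ℕ → Ω → Z) (W : ℕ → Ω → ℝ)
    (hpj_meas : Measurable pj) (hq_meas : Measurable q)
    (hpj_nonneg : ∀ z, 0 ≤ pj z) (hq_nonneg : ∀ z, 0 ≤ q z)
    (hq_prob : ∫ z, q z ∂ν = 1)
    (habs : ∀ z, 0 < pj z → 0 < q z)
    (hpx : px = ∫ z, pj z ∂ν) (hpx_pos : 0 < px)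
    (hZ_meas : ∀ k, Measurable (Zs k))
    -- each `Zₖ` has density `q`, and the `Zₖ` are i.i.d.
    (hlaw : ∀ k, Measure.map (Zs k) Pr = ν.withDensity (fun z => ENNReal.ofReal (q z)))
    (hindep : iIndepFun Zs Pr)
    (hW : ∀ k ω, W k ω = pj (Zs k ω) / q (Zs k ω))
    -- `W₁` is integrable with `E[W₁] = p(x)` and finite variance
    (hW_int : Integrable (W 0) Pr)
    (hW_mean : ∫ ω, W 0 ω ∂Pr = px)
    (hW_var : Integrable (fun ω => (W 0 ω) ^ 2) Pr)
    -- uniform integrability of `log((1/K) ∑ₖ Wₖ)`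
    (hUI : UnifIntegrable
      (fun (K : ℕ) ω => Real.log ((1 / (K : ℝ)) * ∑ k ∈ Finset.range K, W k ω)) 1 Pr) :
    Filter.Tendsto
      (fun K : ℕ =>
        Real.log px -
          ∫ ω, Real.log ((1 / (K : ℝ)) * ∑ k ∈ Finset.range K, W k ω) ∂Pr)
      Filter.atTop (nhds 0) :=
  iwae_bound_consistent_general ν Pr pj q px Zs W hpj_meas hq_meas hpx_pos hZ_meas hlaw hindep hW
    hW_int hW_mean hUI
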